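/- arXiv:2511.22386 — 2 statements merged into one kernel-verified Lean document; each statement's English description precedes it below -/
import Mathlib

section
/- Every finite negation-closed epistemic space is identifiable in the limit by minimal revision; equivalently, minimal revision is universal on positive and negative data over finite spaces, since negation-closed spaces with point-separating observables are strongly separated. -/
namespace Epi

variable {W : Type*}

/-- The set of observables true at state `s`. -/
def obsAt (O : Set (Set W)) (s : W) : Set (Set W) := {p ∈ O | s ∈ p}

/-- The epistemic-space separation condition: distinct worlds satisfy distinct observables. -/
def Separating (O : Set (Set W)) : Prop := ∀ s t : W, obsAt O s = obsAt O t → s = t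

/-- `≼`-minimal elements of a set `X`. -/
def minIn (R : W → W → Prop) (X : Set W) : Set W :=
  {s ∈ X | ∀ t ∈ X, (R s t ∨ R t s) → R s t}

def PreorderOn (R : W → W → Prop) : Prop := Reflexive R ∧ Transitive R

def TotalPreorderOn (R : W → W → Prop) : Prop :=
  Reflexive R ∧ Transitive R ∧ ∀ s t : W, R s t ∨ R t s

/-- Strict part of a preorder. -/
def strictR (R : W → W → Prop) (s t : W) : Prop := R s t ∧ ¬ R t s

/-- One-step minimal revision (conservative upgrade) by observable `p`. -/
def miniRev (R : W → W → Prop) (p : Set W) : W → W → Prop :=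
  fun s t => (s ∈ minIn R p ∧ t ∉ minIn R p) ∨
    (R s t ∧ ¬ (t ∈ minIn R p ∧ s ∉ minIn R p))

/-- One-step lexicographic upgrade by observable `p`. -/
def lexRev (R : W → W → Prop) (p : Set W) : W → W → Prop :=
  fun s t => (s ∈ p ∧ t ∈ p ∧ R s t) ∨ (s ∉ p ∧ t ∉ p ∧ R s t) ∨ (s ∈ p ∧ t ∉ p)

/-- Iterated belief revision along a finite data sequence. -/
def iterRev (rev : (W → W → Prop) → Set W → (W → W → Prop))
    (R : W → W → Prop) (σ : List (Set W)) : W → W → Prop :=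
  σ.foldl rev R

/-- The initial segment of length `n` of a data stream. -/
def seg (f : ℕ → Set W) (n : ℕ) : List (Set W) := (List.range n).map f

/-- All elements of the stream are observables. -/
def StreamIn (O : Set (Set W)) (f : ℕ → Set W) : Prop := ∀ n, f n ∈ O

/-- Soundness of a stream w.r.t. `s`. -/
def SoundStream (s : W) (f : ℕ → Set W) : Prop := ∀ n, s ∈ f n

/-- Completeness of a stream w.r.t. `s`. -/
def CompleteStream (O : Set (Set W)) (s : W) (f : ℕ → Set W) : Prop :=
  ∀ p ∈ obsAt O s, ∃ n, f n = p

/-- Canonical learner induced by minimal revision and prior `R`. -/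
def miniLearner (R : W → W → Prop) (σ : List (Set W)) : Set W :=
  minIn (iterRev miniRev R σ) Set.univ

/-- Canonical learner induced by lexicographic upgrade and prior `R`. -/
def lexLearner (R : W → W → Prop) (σ : List (Set W)) : Set W :=
  minIn (iterRev lexRev R σ) Set.univ

/-- Canonical learner induced by conditioning and prior `R`:
minimal elements among the worlds surviving all observations in `σ`. -/
def condLearner (R : W → W → Prop) (σ : List (Set W)) : Set W :=
  minIn R {w | ∀ p ∈ σ, w ∈ p}

/-- A learner identifies state `s` in the limit. -/
def IdentifiesInLimit (O : Set (Set W)) (L : List (Set W) → Set W) (s : W) : Prop :=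
  ∀ f : ℕ → Set W, StreamIn O f → SoundStream s f → CompleteStream O s f →
    ∃ n, ∀ k, n ≤ k → L (seg f k) = {s}

/-- Finite identification: the learner makes exactly one guess, and it is correct. -/
def FinitelyIdentifies (O : Set (Set W)) (L : List (Set W) → Option W) (s : W) : Prop :=
  ∀ f : ℕ → Set W, StreamIn O f → SoundStream s f → CompleteStream O s f →
    ∃ n, L (seg f n) = some s ∧ ∀ m, m ≠ n → L (seg f m) = none

/-- A definite finite tell-tale map. -/
def DFTTMap (O : Set (Set W)) (D : W → Set (Set W)) : Prop :=
  ∀ s : W, (D s).Finite ∧ D s ⊆ obsAt O s ∧ ∀ t : W, D s ⊆ obsAt O t → s = t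

/-- A finite space mini tell-tale map for `R` and the space. -/
def FSMiniTellTaleMap (O : Set (Set W)) (R : W → W → Prop) (F : W → Set (Set W)) : Prop :=
  ∀ s : W, F s ⊆ obsAt O s ∧
    ∃ p ∈ F s, s ∈ minIn R p ∧
      ∀ t : W, t ≠ s → (R s t ∧ R t s) → t ∈ minIn R p →
        ∃ q ∈ F s, s ∈ minIn R q ∧ t ∉ minIn R q

/-- A generalised conditioning tell-tale map for `R` and the space. -/
def GenCondTellTaleMap (O : Set (Set W)) (R : W → W → Prop) (F : W → Set (Set W)) : Prop :=
  ∀ s : W,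
    (F s).Finite ∧ F s ⊆ obsAt O s ∧
    (∀ t : W, (R s t ∨ R t s) → F s ⊆ obsAt O t → s ≠ t → strictR R s t) ∧
    (∀ F' : Set (Set W), F'.Finite → F s ⊆ F' → F' ⊆ obsAt O s →
      ∀ t : W, ¬ (R s t ∨ R t s) → F' ⊆ obsAt O t →
        ∃ v : W, strictR R v t ∧ F' ⊆ obsAt O v)

/-- Fair data stream w.r.t. `s` (finitely many, eventually corrected, errors). -/
def FairStream (O : Set (Set W)) (s : W) (f : ℕ → Set W) : Prop :=
  CompleteStream O s f ∧ (∃ n, ∀ k, n ≤ k → s ∈ f k) ∧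
    (∀ i, s ∉ f i → ∃ k, i < k ∧ f k = (f i)ᶜ)

/-! With the flat prior, under which all worlds are equally plausible, minimal revision by data
consistent with the current beliefs simply shrinks the set of most plausible worlds to those
satisfying the data. Since the data are true at the actual world `s`, this never empties the set,
so after reading `σ` the learner believes exactly the worlds satisfying all of `σ`. In a
negation-closed separating space every `t ≠ s` falsifies some observable true at `s`, which a
complete stream eventually presents; by finiteness this eventually happens for all `t` at once. -/

section MinimalRevision

variable {R : W → W → Prop}

lemma mem_minIn_iff (htot : ∀ s t, R s t ∨ R t s) {X : Set W} {s : W} :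
    s ∈ minIn R X ↔ s ∈ X ∧ ∀ t ∈ X, R s t :=
  ⟨fun ⟨hs, h⟩ => ⟨hs, fun t ht => h t ht (htot s t)⟩, fun ⟨hs, h⟩ => ⟨hs, fun t ht _ => h t ht⟩⟩

lemma miniRev_iff (htot : ∀ s t, R s t ∨ R t s) (p : Set W) (s t : W) :
    miniRev R p s t ↔ s ∈ minIn R p ∨ (t ∉ minIn R p ∧ R s t) := by
  constructor
  · rintro (⟨hs, -⟩ | ⟨hst, hnot⟩)
    · exact Or.inl hs
    · by_cases hs : s ∈ minIn R p
      · exact Or.inl hs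
      · exact Or.inr ⟨fun ht => hnot ⟨ht, hs⟩, hst⟩
  · rintro (hs | ⟨ht, hst⟩)
    · by_cases ht : t ∈ minIn R p
      · exact Or.inr ⟨((mem_minIn_iff htot).1 hs).2 t ht.1, fun h => h.2 hs⟩
      · exact Or.inl ⟨hs, ht⟩
    · exact Or.inr ⟨hst, fun h => ht h.1⟩

lemma TotalPreorderOn.miniRev (hR : TotalPreorderOn R) (p : Set W) :
    TotalPreorderOn (miniRev R p) := by
  obtain ⟨hrefl, htrans, htot⟩ := hR
  refine ⟨fun s => ?_, fun s t u hst htu => ?_, fun s t => ?_⟩ <;>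
    simp only [miniRev_iff htot] at *
  · by_cases hs : s ∈ minIn R p
    · exact Or.inl hs
    · exact Or.inr ⟨hs, hrefl s⟩
  · rcases hst with hs | ⟨ht, hst⟩
    · exact Or.inl hs
    · rcases htu with ht' | ⟨hu, htu⟩
      · exact absurd ht' ht
      · exact Or.inr ⟨hu, htrans hst htu⟩
  · by_cases hs : s ∈ minIn R p
    · exact Or.inl (Or.inl hs)
    by_cases ht : t ∈ minIn R p
    · exact Or.inr (Or.inl ht)
    rcases htot s t with h | h
    · exact Or.inl (Or.inr ⟨ht, h⟩)
    · exact Or.inr (Or.inr ⟨hs, h⟩)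

lemma minIn_univ_miniRev (htot : ∀ s t, R s t ∨ R t s) {p : Set W}
    (h : (minIn R p).Nonempty) : minIn (miniRev R p) Set.univ = minIn R p := by
  obtain ⟨x, hx⟩ := h
  ext s
  refine ⟨fun hs => ?_, fun hs =>
    ⟨Set.mem_univ s, fun t _ _ => (miniRev_iff htot p s t).2 (Or.inl hs)⟩⟩
  have hsx := hs.2 x (Set.mem_univ x) (Or.inr ((miniRev_iff htot p x s).2 (Or.inl hx)))
  rcases (miniRev_iff htot p s x).1 hsx with hs | ⟨hx', -⟩
  · exact hs
  · exact absurd hx hx'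

lemma minIn_eq_minIn_univ_inter (hR : TotalPreorderOn R) {p : Set W}
    (h : (minIn R Set.univ ∩ p).Nonempty) : minIn R p = minIn R Set.univ ∩ p := by
  obtain ⟨-, htrans, htot⟩ := hR
  obtain ⟨x, hx, hxp⟩ := h
  replace hx := ((mem_minIn_iff htot).1 hx).2
  ext s
  simp only [Set.mem_inter_iff, mem_minIn_iff htot, Set.mem_univ, forall_const, true_and]
  exact ⟨fun ⟨hs, hmin⟩ => ⟨fun t => htrans (hmin x hxp) (hx t trivial), hs⟩,
    fun ⟨hmin, hs⟩ => ⟨hs, fun t _ => hmin t⟩⟩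

lemma minIn_univ_iterRev_miniRev (hR : TotalPreorderOn R) {s : W}
    (hs : s ∈ minIn R Set.univ) {σ : List (Set W)} (hσ : ∀ p ∈ σ, s ∈ p) :
    minIn (iterRev miniRev R σ) Set.univ = minIn R Set.univ ∩ {w | ∀ p ∈ σ, w ∈ p} := by
  induction σ generalizing R with
  | nil => simp [iterRev]
  | cons p σ ih =>
    have hsp : s ∈ minIn R Set.univ ∩ p := ⟨hs, hσ p List.mem_cons_self⟩
    have hp : minIn R p = minIn R Set.univ ∩ p := minIn_eq_minIn_univ_inter hR ⟨s, hsp⟩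
    have hmin : minIn (miniRev R p) Set.univ = minIn R Set.univ ∩ p := by
      rw [minIn_univ_miniRev hR.2.2 (hp ▸ ⟨s, hsp⟩), hp]
    have hs' : s ∈ minIn (miniRev R p) Set.univ := hmin ▸ hsp
    change minIn (iterRev miniRev (miniRev R p) σ) Set.univ = _
    rw [ih (hR.miniRev p) hs' fun q hq => hσ q (List.mem_cons_of_mem p hq), hmin]
    ext w
    simp [and_assoc]

end MinimalRevision

lemma Separating.exists_mem_obsAt_not_mem {O : Set (Set W)} (hsep : Separating O)
    (hneg : ∀ p ∈ O, ∃ q ∈ O, p = qᶜ) {s t : W} (hst : s ≠ t) : ∃ p ∈ obsAt O s, t ∉ p := by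
  by_contra! h
  refine hst (hsep s t (Set.Subset.antisymm (fun p hp => ⟨hp.1, h p hp⟩) fun p hp => ?_))
  obtain ⟨q, hqO, rfl⟩ := hneg p hp.1
  by_cases hsq : s ∈ q
  · exact absurd (h q ⟨hqO, hsq⟩) hp.2
  · exact ⟨hp.1, hsq⟩

lemma mem_seg {f : ℕ → Set W} {k : ℕ} {p : Set W} : p ∈ seg f k ↔ ∃ i < k, f i = p := by
  simp [seg]

lemma SoundStream.mem_of_mem_seg {s : W} {f : ℕ → Set W} (hsound : SoundStream s f) {k : ℕ}
    {p : Set W} (hp : p ∈ seg f k) : s ∈ p := by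
  obtain ⟨i, -, rfl⟩ := mem_seg.1 hp
  exact hsound i

lemma exists_forall_seg_eq_singleton [Finite W] {O : Set (Set W)} {s : W} {f : ℕ → Set W}
    (hO : ∀ t ≠ s, ∃ p ∈ obsAt O s, t ∉ p) (hsound : SoundStream s f)
    (hcomp : CompleteStream O s f) :
    ∃ n, ∀ k, n ≤ k → {w | ∀ p ∈ seg f k, w ∈ p} = {s} := by
  suffices ∀ t, ∀ᶠ k in Filter.atTop, (∀ p ∈ seg f k, t ∈ p) ↔ t = s by
    obtain ⟨n, hn⟩ := Filter.eventually_atTop.1 (Filter.eventually_all.2 this)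
    exact ⟨n, fun k hk => Set.ext (hn k hk)⟩
  intro t
  by_cases hts : t = s
  · subst hts
    exact Filter.Eventually.of_forall fun k => iff_of_true (fun _ => hsound.mem_of_mem_seg) rfl
  obtain ⟨p, hp, htp⟩ := hO t hts
  obtain ⟨m, rfl⟩ := hcomp p hp
  filter_upwards [Filter.eventually_gt_atTop m] with k hk
  exact iff_of_false (fun h => htp (h _ (mem_seg.2 ⟨m, hk, rfl⟩))) hts

/-- Every finite negation-closed epistemic space is identifiable in the
limit by minimal revision (for some prior total preorder). -/
theorem mini_universal_on_finite_negation_closed {W : Type*} [Finite W]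
    (O : Set (Set W)) (hsep : Separating O)
    (hneg : ∀ p ∈ O, ∃ q ∈ O, p = qᶜ) :
    ∃ R : W → W → Prop, TotalPreorderOn R ∧
      ∀ s : W, IdentifiesInLimit O (miniLearner R) s := by
  have hflat : TotalPreorderOn fun _ _ : W => True :=
    ⟨fun _ => trivial, fun _ _ _ _ _ => trivial, fun _ _ => Or.inl trivial⟩
  refine ⟨fun _ _ => True, hflat, fun s f _ hsound hcomp => ?_⟩
  obtain ⟨n, hn⟩ := exists_forall_seg_eq_singleton
    (fun t hts => hsep.exists_mem_obsAt_not_mem hneg (Ne.symm hts)) hsound hcomp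
  refine ⟨n, fun k hk => ?_⟩
  have hs : s ∈ minIn (fun _ _ : W => True) Set.univ := ⟨trivial, fun _ _ _ => trivial⟩
  rw [miniLearner, minIn_univ_iterRev_miniRev hflat hs fun _ => hsound.mem_of_mem_seg, hn k hk]
  exact Set.inter_eq_right.2 fun w _ => ⟨trivial, fun _ _ _ => trivial⟩

end Epi
end

section
/- The epistemic space with two states s, t and observables p = {s}, q = {s, t} is identifiable in the limit by minimal revision using the prior t ≺ s, yet it is not finitely identifiable, because O_t ⊆ O_s implies t has no definite finite tell-tale set. Hence the class of finitely identifiable spaces is properly included in the class of spaces learnable by minimal revision. -/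
namespace Epi

variable {W : Type*}

section Aux19

/-- `p = {0}` -/
private abbrev pp : Set (Fin 2) := {0}
/-- `q = {0,1}` -/
private abbrev qq : Set (Fin 2) := {0, 1}

private lemma fin2 (x : Fin 2) : x = 0 ∨ x = 1 := by omega

/-- `0` strictly below `1`. -/
private def IsA (R : Fin 2 → Fin 2 → Prop) : Prop := R 0 0 ∧ R 1 1 ∧ R 0 1 ∧ ¬ R 1 0
/-- `1` strictly below `0`. -/
private def IsB (R : Fin 2 → Fin 2 → Prop) : Prop := R 0 0 ∧ R 1 1 ∧ R 1 0 ∧ ¬ R 0 1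

private lemma mem_minIn {R : Fin 2 → Fin 2 → Prop} {X : Set (Fin 2)} {x} :
    x ∈ minIn R X ↔ x ∈ X ∧ ∀ t ∈ X, (R x t ∨ R t x) → R x t := Iff.rfl

private lemma minIn_pp (R : Fin 2 → Fin 2 → Prop) (h00 : R 0 0) :
    minIn R pp = ({0} : Set (Fin 2)) := by
  ext x
  rcases fin2 x with rfl | rfl
  · exact iff_of_true
      ⟨rfl, by intro t ht _; simp only [Set.mem_singleton_iff] at ht; subst ht; exact h00⟩ rfl
  · exact iff_of_false (fun h => absurd h.1 (by decide)) (by decide)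

private lemma minIn_qq_B {R : Fin 2 → Fin 2 → Prop} (h : IsB R) :
    minIn R qq = ({1} : Set (Fin 2)) := by
  obtain ⟨h00, h11, h10, hn01⟩ := h
  ext x
  rcases fin2 x with rfl | rfl
  · exact iff_of_false
      (fun h => absurd (h.2 1 (by decide) (Or.inr h10)) hn01) (by decide)
  · refine iff_of_true ⟨by decide, ?_⟩ rfl
    intro t ht _
    rcases fin2 t with rfl | rfl
    · exact h10
    · exact h11

private lemma minIn_qq_A {R : Fin 2 → Fin 2 → Prop} (h : IsA R) :
    minIn R qq = ({0} : Set (Fin 2)) := by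
  obtain ⟨h00, h11, h01, hn10⟩ := h
  ext x
  rcases fin2 x with rfl | rfl
  · refine iff_of_true ⟨by decide, ?_⟩ rfl
    intro t ht _
    rcases fin2 t with rfl | rfl
    · exact h00
    · exact h01
  · exact iff_of_false
      (fun h => absurd (h.2 0 (by decide) (Or.inr h01)) hn10) (by decide)

private lemma minIn_univ_A {R : Fin 2 → Fin 2 → Prop} (h : IsA R) :
    minIn R Set.univ = ({0} : Set (Fin 2)) := by
  obtain ⟨h00, h11, h01, hn10⟩ := h
  ext x
  rcases fin2 x with rfl | rfl
  · refine iff_of_true ⟨trivial, ?_⟩ rfl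
    intro t _ _
    rcases fin2 t with rfl | rfl
    · exact h00
    · exact h01
  · exact iff_of_false
      (fun h => absurd (h.2 0 trivial (Or.inr h01)) hn10) (by decide)

private lemma minIn_univ_B {R : Fin 2 → Fin 2 → Prop} (h : IsB R) :
    minIn R Set.univ = ({1} : Set (Fin 2)) := by
  obtain ⟨h00, h11, h10, hn01⟩ := h
  ext x
  rcases fin2 x with rfl | rfl
  · exact iff_of_false
      (fun h => absurd (h.2 1 trivial (Or.inr h10)) hn01) (by decide)
  · refine iff_of_true ⟨trivial, ?_⟩ rfl
    intro t _ _
    rcases fin2 t with rfl | rfl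
    · exact h10
    · exact h11

private lemma miniRev_B_pp {R : Fin 2 → Fin 2 → Prop} (h : IsB R) :
    IsA (miniRev R pp) := by
  obtain ⟨h00, h11, h10, hn01⟩ := h
  have hM : minIn R pp = ({0} : Set (Fin 2)) := minIn_pp R h00
  refine ⟨?_, ?_, ?_, ?_⟩ <;> simp only [miniRev, hM]
  · exact Or.inr ⟨h00, by simp⟩
  · exact Or.inr ⟨h11, by simp⟩
  · exact Or.inl ⟨by decide, by decide⟩
  · rintro (⟨h1, -⟩ | ⟨-, h2⟩)
    · exact absurd h1 (by decide)
    · exact h2 ⟨by decide, by decide⟩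

private lemma miniRev_B_qq {R : Fin 2 → Fin 2 → Prop} (h : IsB R) :
    IsB (miniRev R qq) := by
  have hM : minIn R qq = ({1} : Set (Fin 2)) := minIn_qq_B h
  obtain ⟨h00, h11, h10, hn01⟩ := h
  refine ⟨?_, ?_, ?_, ?_⟩ <;> simp only [miniRev, hM]
  · exact Or.inr ⟨h00, by simp⟩
  · exact Or.inr ⟨h11, by simp⟩
  · exact Or.inl ⟨by decide, by decide⟩
  · rintro (⟨h1, -⟩ | ⟨h2, -⟩)
    · exact absurd h1 (by decide)
    · exact hn01 h2

private lemma miniRev_A_pp {R : Fin 2 → Fin 2 → Prop} (h : IsA R) :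
    IsA (miniRev R pp) := by
  obtain ⟨h00, h11, h01, hn10⟩ := h
  have hM : minIn R pp = ({0} : Set (Fin 2)) := minIn_pp R h00
  refine ⟨?_, ?_, ?_, ?_⟩ <;> simp only [miniRev, hM]
  · exact Or.inr ⟨h00, by simp⟩
  · exact Or.inr ⟨h11, by simp⟩
  · exact Or.inl ⟨by decide, by decide⟩
  · rintro (⟨h1, -⟩ | ⟨h2, -⟩)
    · exact absurd h1 (by decide)
    · exact hn10 h2

private lemma miniRev_A_qq {R : Fin 2 → Fin 2 → Prop} (h : IsA R) :
    IsA (miniRev R qq) := by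
  have hM : minIn R qq = ({0} : Set (Fin 2)) := minIn_qq_A h
  obtain ⟨h00, h11, h01, hn10⟩ := h
  refine ⟨?_, ?_, ?_, ?_⟩ <;> simp only [miniRev, hM]
  · exact Or.inr ⟨h00, by simp⟩
  · exact Or.inr ⟨h11, by simp⟩
  · exact Or.inl ⟨by decide, by decide⟩
  · rintro (⟨h1, -⟩ | ⟨h2, -⟩)
    · exact absurd h1 (by decide)
    · exact hn10 h2

/-- `IsA` is absorbing along any stream of `pp`/`qq` observations. -/
private lemma foldl_A {R : Fin 2 → Fin 2 → Prop} (h : IsA R) :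
    ∀ σ : List (Set (Fin 2)), (∀ x ∈ σ, x = pp ∨ x = qq) →
      IsA (List.foldl miniRev R σ) := by
  intro σ
  induction σ generalizing R with
  | nil => intro _; exact h
  | cons a rest ih =>
    intro hmem
    have ha := hmem a List.mem_cons_self
    have hrest : ∀ x ∈ rest, x = pp ∨ x = qq := fun x hx => hmem x (List.mem_cons_of_mem a hx)
    rcases ha with rfl | rfl
    · exact ih (miniRev_A_pp h) hrest
    · exact ih (miniRev_A_qq h) hrest

private lemma foldl_B {R : Fin 2 → Fin 2 → Prop} (h : IsB R) :
    ∀ σ : List (Set (Fin 2)), (∀ x ∈ σ, x = qq) →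
      IsB (List.foldl miniRev R σ) := by
  intro σ
  induction σ generalizing R with
  | nil => intro _; exact h
  | cons a rest ih =>
    intro hmem
    have ha := hmem a List.mem_cons_self
    subst ha
    exact ih (miniRev_B_qq h) fun x hx => hmem x (List.mem_cons_of_mem _ hx)

private lemma foldl_B_to_A {R : Fin 2 → Fin 2 → Prop} (h : IsB R) :
    ∀ σ : List (Set (Fin 2)), (∀ x ∈ σ, x = pp ∨ x = qq) → pp ∈ σ →
      IsA (List.foldl miniRev R σ) := by
  intro σ
  induction σ generalizing R with
  | nil => intro _ hp; exact absurd hp List.not_mem_nil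
  | cons a rest ih =>
    intro hmem hp
    have hrest : ∀ x ∈ rest, x = pp ∨ x = qq := fun x hx => hmem x (List.mem_cons_of_mem a hx)
    rcases hmem a List.mem_cons_self with rfl | rfl
    · exact foldl_A (miniRev_B_pp h) rest hrest
    · have hp' : pp ∈ rest := by
        rcases List.mem_cons.mp hp with heq | h'
        · exact absurd heq (by
            intro hpq
            have : (1 : Fin 2) ∈ pp := hpq ▸ (by decide : (1 : Fin 2) ∈ qq)
            exact absurd this (by decide))
        · exact h'
      exact ih (miniRev_B_qq h) hrest hp'

end Aux19

/-- The two-state space `p = {s}`, `q = {s,t}` is identified in the limit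
by minimal revision with the prior `t ≺ s`, yet it is not finitely identifiable (it has
no definite finite tell-tale map, since `O_t ⊆ O_s`). Here `s = 0`, `t = 1` in `Fin 2`. -/
theorem mini_learnable_but_not_finitely_identifiable :
    let p : Set (Fin 2) := {0}
    let q : Set (Fin 2) := {0, 1}
    let O : Set (Set (Fin 2)) := {p, q}
    (∀ R : Fin 2 → Fin 2 → Prop, TotalPreorderOn R → strictR R 1 0 →
        ∀ x : Fin 2, IdentifiesInLimit O (miniLearner R) x) ∧
    ¬ ∃ D : Fin 2 → Set (Set (Fin 2)), DFTTMap O D := by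
  intro p q O
  constructor
  · -- identification in the limit by minimal revision
    intro R hR hst x f hin hsound hcomp
    have hB : IsB R := ⟨hR.1 0, hR.1 1, hst.1, hst.2⟩
    have hmem : ∀ n, f n = pp ∨ f n = qq := by
      intro n
      rcases hin n with h | h
      · exact Or.inl h
      · exact Or.inr h
    have hseg : ∀ k, ∀ y ∈ seg f k, y = pp ∨ y = qq := by
      intro k y hy
      simp only [seg, List.mem_map, List.mem_range] at hy
      obtain ⟨n, -, rfl⟩ := hy
      exact hmem n
    rcases fin2 x with rfl | rfl
    · -- x = 0 : eventually p appears, relation switches to A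
      obtain ⟨n0, hn0⟩ := hcomp p ⟨Or.inl rfl, by decide⟩
      refine ⟨n0 + 1, ?_⟩
      intro k hk
      have hpmem : pp ∈ seg f k := by
        simp only [seg, List.mem_map, List.mem_range]
        exact ⟨n0, by omega, hn0⟩
      have hA : IsA (List.foldl miniRev R (seg f k)) :=
        foldl_B_to_A hB (seg f k) (hseg k) hpmem
      exact minIn_univ_A hA
    · -- x = 1 : every datum is q, relation stays B
      refine ⟨0, ?_⟩
      intro k _
      have hq : ∀ y ∈ seg f k, y = qq := by
        intro y hy
        rcases hseg k y hy with rfl | rfl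
        · -- y = pp: but 1 ∈ y by soundness, contradiction
          simp only [seg, List.mem_map, List.mem_range] at hy
          obtain ⟨n, -, hfn⟩ := hy
          have h1 : (1 : Fin 2) ∈ f n := hsound n
          rw [hfn] at h1
          exact absurd h1 (by decide)
        · rfl
      have hBk : IsB (List.foldl miniRev R (seg f k)) := foldl_B hB (seg f k) hq
      exact minIn_univ_B hBk
  · -- no definite finite tell-tale map
    rintro ⟨D, hD⟩
    obtain ⟨-, hsub, huniq⟩ := hD 1
    have hsub0 : D 1 ⊆ obsAt O 0 := by
      intro r hr
      obtain ⟨hrO, h1r⟩ := hsub hr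
      refine ⟨hrO, ?_⟩
      rcases hrO with rfl | rfl
      · exact rfl
      · exact Or.inl rfl
    exact absurd (huniq 0 hsub0) (by decide)

end Epi
end
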